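/- (BN-θ coefficient bound) Let 0 < α < 1, 0 ≤ θ ≤ 1/2, ρ₁ = (1-2θ)/(3-2θ), ρ₂ = θα/(1+θα), and b_0 = (3/2 - θ)^{-α}/(1+θα). Define b_n = b_0 Σ_{j=0}^n a_j^{(-α)} ρ₁^j ρ₂^{n-j}, where a_j^{(-α)} = Γ(j+α)/(Γ(α)Γ(j+1)). Then b_n > 0 for all n, b_n ≲ 2^{-n}, and Σ_{n=1}^∞ b_n < b_0. -/

import Mathlib

/-- Taylor coefficients of `(1-z)^{-α}`: `a_n^{(-α)} = Γ(n+α)/(Γ(α)Γ(n+1))`. -/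
noncomputable def aNeg (α : ℝ) (n : ℕ) : ℝ :=
  Real.Gamma (n + α) / (Real.Gamma α * (n.factorial : ℝ))

/-- BN-θ coefficients:
`b_n = b_0 Σ_{j=0}^n a_j^{(-α)} ρ₁^j ρ₂^{n-j}` with
`ρ₁ = (1-2θ)/(3-2θ)`, `ρ₂ = θα/(1+θα)`, `b_0 = (3/2-θ)^{-α}/(1+θα)`. -/
noncomputable def bBN (α θ : ℝ) (n : ℕ) : ℝ :=
  (((3 : ℝ) / 2 - θ) ^ (-α) / (1 + θ * α)) *
    ∑ j ∈ Finset.range (n + 1),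
      aNeg α j * ((1 - 2 * θ) / (3 - 2 * θ)) ^ j * (θ * α / (1 + θ * α)) ^ (n - j)

lemma aNeg_zero {α : ℝ} (hα : 0 < α) : aNeg α 0 = 1 := by
  have h : Real.Gamma α ≠ 0 := (Real.Gamma_pos_of_pos hα).ne'
  simp [aNeg, div_self h]

lemma aNeg_pos {α : ℝ} (hα : 0 < α) (n : ℕ) : 0 < aNeg α n := by
  have h1 : 0 < Real.Gamma ((n : ℝ) + α) := Real.Gamma_pos_of_pos (by positivity)
  have h2 : 0 < Real.Gamma α := Real.Gamma_pos_of_pos hα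
  have h3 : 0 < (n.factorial : ℝ) := by positivity
  exact div_pos h1 (by positivity)

lemma aNeg_succ {α : ℝ} (hα : 0 < α) (n : ℕ) :
    aNeg α (n + 1) = aNeg α n * (((n : ℝ) + α) / ((n : ℝ) + 1)) := by
  unfold aNeg
  have h : (((n + 1 : ℕ) : ℝ)) + α = ((n : ℝ) + α) + 1 := by push_cast; ring
  rw [h, Real.Gamma_add_one (by positivity), Nat.factorial_succ]
  have h2 : Real.Gamma α ≠ 0 := (Real.Gamma_pos_of_pos hα).ne'
  have h3 : (n.factorial : ℝ) ≠ 0 := by positivity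
  have h4 : ((n : ℝ) + 1) ≠ 0 := by positivity
  push_cast
  field_simp

lemma aNeg_le_one {α : ℝ} (hα : 0 < α) (hα1 : α ≤ 1) (n : ℕ) : aNeg α n ≤ 1 := by
  induction n with
  | zero => rw [aNeg_zero hα]
  | succ n ih =>
    rw [aNeg_succ hα]
    have h : ((n : ℝ) + α) / ((n : ℝ) + 1) ≤ 1 := by
      rw [div_le_one (by positivity)]; linarith
    have h0 : 0 ≤ ((n : ℝ) + α) / ((n : ℝ) + 1) := by positivity
    calc aNeg α n * (((n : ℝ) + α) / ((n : ℝ) + 1)) ≤ 1 * 1 :=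
          mul_le_mul ih h h0 one_pos.le
      _ = 1 := one_mul 1

lemma nat_le_pow32 (n : ℕ) : ((n : ℝ) + 2) ≤ 3 * (3 / 2) ^ n := by
  induction n with
  | zero => norm_num
  | succ n ih =>
    have h : (3 : ℝ) * (3 / 2) ^ (n + 1) = (3 / 2) * (3 * (3 / 2) ^ n) := by ring
    rw [h]
    push_cast
    nlinarith [ih]

theorem stmt14 (α θ : ℝ) (hα : 0 < α) (hα1 : α < 1) (hθ0 : 0 ≤ θ) (hθ : θ ≤ 1 / 2) :
    (∀ n : ℕ, 0 < bBN α θ n) ∧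
    (∃ C > (0 : ℝ), ∀ n : ℕ, bBN α θ n ≤ C * (2 : ℝ) ^ (-(n : ℝ))) ∧
    Summable (fun n : ℕ => bBN α θ (n + 1)) ∧
    (∑' n : ℕ, bBN α θ (n + 1)) < bBN α θ 0 := by
  have h32 : (0:ℝ) < 3 - 2*θ := by linarith
  have h1θα : (0:ℝ) < 1 + θ*α := by nlinarith
  set r₁ : ℝ := (1 - 2*θ)/(3 - 2*θ) with hr1def
  set r₂ : ℝ := θ*α/(1 + θ*α) with hr2def
  set c : ℝ := ((3:ℝ)/2 - θ)^(-α)/(1 + θ*α) with hcdef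
  have hb : ∀ n, bBN α θ n
      = c * ∑ j ∈ Finset.range (n+1), aNeg α j * r₁^j * r₂^(n-j) := by
    intro n
    simp only [bBN]
    rfl
  have hc : 0 < c := div_pos (Real.rpow_pos_of_pos (by linarith) _) h1θα
  have hr1_0 : 0 ≤ r₁ := div_nonneg (by linarith) h32.le
  have hr1_3 : r₁ ≤ 1/3 := by
    rw [hr1def, div_le_div_iff₀ h32 (by norm_num)]; linarith
  have hθα_le : θ*α ≤ θ := by nlinarith
  have hr2_0 : 0 ≤ r₂ := div_nonneg (by positivity) h1θα.le
  have hr2_3 : r₂ ≤ 1/3 := by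
    rw [hr2def, div_le_div_iff₀ h1θα (by norm_num)]; nlinarith
  have haneg : ∀ j, 0 < aNeg α j := fun j => aNeg_pos hα j
  have hterm_nonneg : ∀ n : ℕ, ∀ j ∈ Finset.range (n+1),
      0 ≤ aNeg α j * r₁^j * r₂^(n-j) := by
    intro n j _
    have := (haneg j).le
    positivity
  -- positivity
  have hpos : ∀ n : ℕ, 0 < bBN α θ n := by
    intro n
    rw [hb]
    apply mul_pos hc
    apply Finset.sum_pos' (hterm_nonneg n)
    rcases eq_or_lt_of_le hθ with h | h
    · refine ⟨0, Finset.mem_range.mpr (Nat.succ_pos n), ?_⟩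
      have hr2pos : 0 < r₂ := div_pos (by nlinarith) h1θα
      simp only [pow_zero, mul_one, Nat.sub_zero, aNeg_zero hα, one_mul]
      exact pow_pos hr2pos n
    · refine ⟨n, Finset.self_mem_range_succ n, ?_⟩
      have hr1pos : 0 < r₁ := div_pos (by linarith) h32
      rw [Nat.sub_self, pow_zero, mul_one]
      exact mul_pos (haneg n) (pow_pos hr1pos n)
  -- the geometric-type bound
  have hsum_le : ∀ n : ℕ,
      (∑ j ∈ Finset.range (n+1), aNeg α j * r₁^j * r₂^(n-j)) ≤ ((n:ℝ)+1) * (1/3)^n := by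
    intro n
    calc (∑ j ∈ Finset.range (n+1), aNeg α j * r₁^j * r₂^(n-j))
        ≤ ∑ _j ∈ Finset.range (n+1), (1/3:ℝ)^n := by
          apply Finset.sum_le_sum
          intro j hj
          have hj' : j ≤ n := Nat.lt_succ_iff.mp (Finset.mem_range.mp hj)
          have h1 : r₁^j ≤ (1/3:ℝ)^j := pow_le_pow_left₀ hr1_0 hr1_3 j
          have h2 : r₂^(n-j) ≤ (1/3:ℝ)^(n-j) := pow_le_pow_left₀ hr2_0 hr2_3 _
          calc aNeg α j * r₁^j * r₂^(n-j) ≤ 1 * (1/3:ℝ)^j * (1/3:ℝ)^(n-j) := by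
                apply mul_le_mul _ h2 (pow_nonneg hr2_0 _) (by positivity)
                exact mul_le_mul (aNeg_le_one hα hα1.le j) h1 (pow_nonneg hr1_0 _) (by norm_num)
            _ = (1/3:ℝ)^n := by rw [one_mul, ← pow_add, Nat.add_sub_cancel' hj']
      _ = ((n:ℝ)+1) * (1/3)^n := by
          rw [Finset.sum_const, Finset.card_range, nsmul_eq_mul]
          push_cast; ring
  have hbound : ∀ n : ℕ, bBN α θ n ≤ (3*c) * (1/2:ℝ)^n := by
    intro n
    rw [hb]
    have h3 : ((n:ℝ)+1) ≤ 3 * (3/2)^n := le_trans (by linarith) (nat_le_pow32 n)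
    have h4 : ((3:ℝ)/2)^n * (1/3)^n = (1/2:ℝ)^n := by rw [← mul_pow]; norm_num
    have h1 : ((n:ℝ)+1) * (1/3)^n ≤ 3 * (1/2:ℝ)^n := by
      calc ((n:ℝ)+1) * (1/3)^n ≤ 3 * (3/2)^n * (1/3)^n :=
            mul_le_mul_of_nonneg_right h3 (by positivity)
        _ = 3 * (1/2:ℝ)^n := by rw [mul_assoc, h4]
    calc c * (∑ j ∈ Finset.range (n+1), aNeg α j * r₁^j * r₂^(n-j))
        ≤ c * (((n:ℝ)+1) * (1/3)^n) := mul_le_mul_of_nonneg_left (hsum_le n) hc.le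
      _ ≤ c * (3 * (1/2:ℝ)^n) := mul_le_mul_of_nonneg_left h1 hc.le
      _ = (3*c) * (1/2:ℝ)^n := by ring
  have hrpow : ∀ n : ℕ, (2:ℝ)^(-(n:ℝ)) = (1/2:ℝ)^n := by
    intro n
    rw [Real.rpow_neg (by norm_num : (0:ℝ) ≤ 2), Real.rpow_natCast, one_div, inv_pow]
  refine ⟨hpos, ⟨3*c, by positivity, fun n => by rw [hrpow]; exact hbound n⟩, ?_, ?_⟩
  -- summability
  · have hgeo : Summable (fun n : ℕ => (3*c) * (1/2:ℝ)^n) :=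
      (summable_geometric_of_lt_one (by norm_num) (by norm_num)).mul_left _
    have hsummb : Summable (fun n : ℕ => bBN α θ n) :=
      Summable.of_nonneg_of_le (fun n => (hpos n).le) hbound hgeo
    exact (summable_nat_add_iff 1).mpr hsummb
  -- the sum bound
  · -- the tsum bound
    have hr1_lt : r₁ < 1 := lt_of_le_of_lt hr1_3 (by norm_num)
    have hr2_lt : r₂ < 1 := lt_of_le_of_lt hr2_3 (by norm_num)
    have hg1 : Summable (fun n : ℕ => ‖r₁^n‖) := by
      simpa [Real.norm_eq_abs, abs_pow, abs_of_nonneg hr1_0] using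
        summable_geometric_of_lt_one hr1_0 hr1_lt
    have hg2 : Summable (fun n : ℕ => ‖r₂^n‖) := by
      simpa [Real.norm_eq_abs, abs_pow, abs_of_nonneg hr2_0] using
        summable_geometric_of_lt_one hr2_0 hr2_lt
    set S : ℕ → ℝ := fun n => ∑ j ∈ Finset.range (n+1), r₁^j * r₂^(n-j) with hSdef
    have hS_sum : Summable S :=
      (summable_norm_sum_mul_range_of_summable_norm hg1 hg2).of_norm
    have hS_tsum : (∑' n : ℕ, S n) = (1 - r₁)⁻¹ * (1 - r₂)⁻¹ := by
      rw [← tsum_geometric_of_lt_one hr1_0 hr1_lt, ← tsum_geometric_of_lt_one hr2_0 hr2_lt]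
      exact (tsum_mul_tsum_eq_tsum_sum_range_of_summable_norm hg1 hg2).symm
    have hinv1 : (1 - r₁)⁻¹ = (3 - 2*θ)/2 := by
      have e1 : 1 - r₁ = 2/(3 - 2*θ) := by
        rw [hr1def]; field_simp
        norm_num
      rw [e1, inv_div]
    have hinv2 : (1 - r₂)⁻¹ = 1 + θ*α := by
      have e2 : 1 - r₂ = 1/(1 + θ*α) := by
        rw [hr2def]; field_simp
        ring
      rw [e2, inv_div, div_one]
    have hS_val : (∑' n : ℕ, S n) = (3 - 2*θ)/2 * (1 + θ*α) := by
      rw [hS_tsum, hinv1, hinv2]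
    have hS0 : S 0 = 1 := by simp [hSdef]
    have hS_nonneg : ∀ n, 0 ≤ S n := by
      intro n
      apply Finset.sum_nonneg
      intro j _
      positivity
    -- key numeric bound
    have hkey : (3 - 2*θ)/2 * (1 + θ*α) ≤ 25/16 := by
      nlinarith [sq_nonneg (θ - 1/4), mul_le_mul_of_nonneg_left hθα_le h32.le]
    -- bBN ≤ c * S
    have hle : ∀ n, bBN α θ n ≤ c * S n := by
      intro n
      rw [hb]
      apply mul_le_mul_of_nonneg_left _ hc.le
      apply Finset.sum_le_sum
      intro j hj
      have h1 : aNeg α j * r₁^j ≤ r₁^j := by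
        nlinarith [aNeg_le_one hα hα1.le j, (haneg j).le, pow_nonneg hr1_0 j]
      exact mul_le_mul_of_nonneg_right h1 (pow_nonneg hr2_0 _)
    have hsummb : Summable (fun n : ℕ => bBN α θ n) :=
      Summable.of_nonneg_of_le (fun n => (hpos n).le)
        (fun n => hbound n)
        ((summable_geometric_of_lt_one (by norm_num) (by norm_num)).mul_left _)
    have hsummb1 : Summable (fun n : ℕ => bBN α θ (n + 1)) :=
      (summable_nat_add_iff 1).mpr hsummb
    have hS1_sum : Summable (fun n : ℕ => c * S (n + 1)) :=
      ((summable_nat_add_iff 1).mpr hS_sum).mul_left c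
    have step1 : (∑' n : ℕ, bBN α θ (n+1)) ≤ ∑' n : ℕ, c * S (n+1) :=
      Summable.tsum_le_tsum (fun n => hle (n+1)) hsummb1 hS1_sum
    have step2 : (∑' n : ℕ, c * S (n+1)) = c * ((∑' n : ℕ, S n) - 1) := by
      rw [tsum_mul_left]
      congr 1
      have := Summable.tsum_eq_zero_add hS_sum
      rw [this, hS0]
      ring
    have hb0 : bBN α θ 0 = c := by
      rw [hb]
      simp [aNeg_zero hα]
    have step3 : c * ((∑' n : ℕ, S n) - 1) < c := by
      rw [hS_val]
      nlinarith [hkey, hc]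
    calc (∑' n : ℕ, bBN α θ (n+1)) ≤ ∑' n : ℕ, c * S (n+1) := step1
      _ = c * ((∑' n : ℕ, S n) - 1) := step2
      _ < c := step3
      _ = bBN α θ 0 := hb0.symm
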